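/- Let n be a natural number and let ρ be a 2^n × 2^n complex matrix that is Hermitian and positive semidefinite. Let the 4^n n-qubit Pauli strings be enumerated as E_a, and define the 4^n × 4^n matrix Γ(ρ) by Γ_{ab}(ρ) = tr(E_aᴴ·ρ) · tr(E_b·ρ) · tr(E_a·E_bᴴ·ρ). Then Γ(ρ) is Hermitian and positive semidefinite. -/

import Mathlib

open Matrix BigOperators
open scoped ComplexOrder

/-- The four single-qubit Pauli matrices: `0 ↦ I`, `1 ↦ X`, `2 ↦ Y`, `3 ↦ Z`. -/
noncomputable def pauliMat : Fin 4 → Matrix (Fin 2) (Fin 2) ℂ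
  | 0 => 1
  | 1 => !![0, 1; 1, 0]
  | 2 => !![0, -Complex.I; Complex.I, 0]
  | 3 => !![1, 0; 0, -1]

/-- The `n`-qubit Pauli string given by `s : Fin n → Fin 4`, i.e. the `n`-fold
Kronecker (tensor) product of the corresponding single-qubit Pauli matrices,
written entrywise in the computational basis `Fin n → Fin 2`. -/
noncomputable def pauliString {n : ℕ} (s : Fin n → Fin 4) :
    Matrix (Fin n → Fin 2) (Fin n → Fin 2) ℂ :=
  Matrix.of fun x y => ∏ i, pauliMat (s i) (x i) (y i)

/-- The weight of a Pauli string: the number of tensor factors that are not `I`. -/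
def pauliWeight {n : ℕ} (s : Fin n → Fin 4) : ℕ :=
  (Finset.univ.filter fun i => s i ≠ 0).card

/-- `P` is (the projector of) a quantum code with parameters `((n, K, δ))₂`:
`P` is a `2^n × 2^n` Hermitian idempotent matrix of rank `K` such that for every
`n`-qubit Pauli string `E` of weight at most `δ - 1` there is a scalar `c` with
`P * E * P = c • P` (the Knill–Laflamme conditions). -/
def IsQuantumCode (n K δ : ℕ) (P : Matrix (Fin n → Fin 2) (Fin n → Fin 2) ℂ) : Prop :=
  P.IsHermitian ∧ P * P = P ∧ P.rank = K ∧
    ∀ s : Fin n → Fin 4, pauliWeight s ≤ δ - 1 →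
      ∃ c : ℂ, P * pauliString s * P = c • P

/-- Purity of a code of distance `δ`: `tr (P * E) = 0` for every Pauli string `E`
with `0 < wt E < δ`. -/
def IsPureCode (n δ : ℕ) (P : Matrix (Fin n → Fin 2) (Fin n → Fin 2) ℂ) : Prop :=
  ∀ s : Fin n → Fin 4, 0 < pauliWeight s → pauliWeight s < δ →
    Matrix.trace (P * pauliString s) = 0

/-!
Put `t a = tr (E_a ρ)`. Since `ρ` is Hermitian, `tr (E_aᴴ ρ) = conj (t a)`, so
`Γ = Dᴴ G D` with `D = diagonal t` and `G a b = tr (E_a E_bᴴ ρ)`. Flattening each `E_a`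
into the row `a` of a matrix `B`, one finds `G = B (ρᵀ ⊗ 1) Bᴴ`, and `ρᵀ ⊗ 1` is positive
semidefinite together with `ρ`. Nothing specific to Pauli strings is used.
-/

namespace Matrix

variable {𝕜 ι m : Type*} [RCLike 𝕜] [Fintype ι] [Fintype m]

theorem PosSemidef.star_mul_mul_entries {M : Matrix ι ι 𝕜} (hM : M.PosSemidef) (t : ι → 𝕜) :
    (of fun a b => star (t a) * t b * M a b).PosSemidef := by
  classical
  convert hM.conjTranspose_mul_mul_same (diagonal t) using 1
  ext a b
  simp only [RCLike.star_def, of_apply, diagonal_conjTranspose, mul_diagonal, diagonal_mul,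
    Pi.star_apply]
  ring

theorem PosSemidef.trace_mul_conjTranspose_mul {ρ : Matrix m m 𝕜} (hρ : ρ.PosSemidef)
    (E : ι → Matrix m m 𝕜) :
    (of fun a b => trace (E a * (E b)ᴴ * ρ)).PosSemidef := by
  classical
  let B : Matrix ι (m × m) 𝕜 := of fun a p => E a p.1 p.2
  convert (hρ.transpose.kronecker PosSemidef.one).mul_mul_conjTranspose_same B using 1
  ext a b
  simp only [trace, diag_apply, mul_apply, conjTranspose_apply, RCLike.star_def, of_apply,
    kroneckerMap_apply, transpose_apply, one_apply, mul_ite, mul_one, mul_zero,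
    Fintype.sum_prod_type, Finset.sum_ite_eq', Finset.mem_univ, if_true, Finset.sum_mul, B]
  rw [Finset.sum_comm]
  refine Finset.sum_congr rfl fun j _ => ?_
  rw [Finset.sum_comm]
  exact Finset.sum_congr rfl fun l _ => Finset.sum_congr rfl fun i _ => by ring

theorem IsHermitian.trace_conjTranspose_mul {ρ : Matrix m m 𝕜} (hρ : ρ.IsHermitian)
    (E : Matrix m m 𝕜) : trace (Eᴴ * ρ) = star (trace (E * ρ)) := by
  rw [← trace_conjTranspose, conjTranspose_mul, hρ.eq, trace_mul_comm]

end Matrix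

theorem stmt_19_general (n : ℕ) (ρ : Matrix (Fin n → Fin 2) (Fin n → Fin 2) ℂ)
    (hpsd : ρ.PosSemidef) :
    (Matrix.of fun a b : Fin n → Fin 4 =>
        Matrix.trace ((pauliString a)ᴴ * ρ) * Matrix.trace (pauliString b * ρ) *
          Matrix.trace (pauliString a * (pauliString b)ᴴ * ρ)).IsHermitian ∧
    (Matrix.of fun a b : Fin n → Fin 4 =>
        Matrix.trace ((pauliString a)ᴴ * ρ) * Matrix.trace (pauliString b * ρ) *
          Matrix.trace (pauliString a * (pauliString b)ᴴ * ρ)).PosSemidef := by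
  have hΓ := (hpsd.trace_mul_conjTranspose_mul pauliString).star_mul_mul_entries
    fun a => trace (pauliString a * ρ)
  simp only [of_apply, ← hpsd.isHermitian.trace_conjTranspose_mul] at hΓ
  exact ⟨hΓ.isHermitian, hΓ⟩

/-- For a Hermitian positive semidefinite $2^n × 2^n$ matrix $ρ$, the $4^n × 4^n$
moment matrix $Γ(ρ)$ with entries
$Γ_{ab}(ρ) = tr(E_a^† ρ) tr(E_b ρ) tr(E_a E_b^† ρ)$, indexed by the $n$-qubit
Pauli strings, is Hermitian and positive semidefinite. -/
theorem stmt_19 (n : ℕ) (ρ : Matrix (Fin n → Fin 2) (Fin n → Fin 2) ℂ)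
    (hherm : ρ.IsHermitian) (hpsd : ρ.PosSemidef) :
    (Matrix.of fun a b : Fin n → Fin 4 =>
        Matrix.trace ((pauliString a)ᴴ * ρ) * Matrix.trace (pauliString b * ρ) *
          Matrix.trace (pauliString a * (pauliString b)ᴴ * ρ)).IsHermitian ∧
    (Matrix.of fun a b : Fin n → Fin 4 =>
        Matrix.trace ((pauliString a)ᴴ * ρ) * Matrix.trace (pauliString b * ρ) *
          Matrix.trace (pauliString a * (pauliString b)ᴴ * ρ)).PosSemidef :=
  stmt_19_general n ρ hpsd
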